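/- arXiv:2103.13156 — 6 statements merged into one kernel-verified Lean document; each statement's English description precedes it below -/
import Mathlib

section
/- Fix p > 0, d > 0, γ > 0, h > 0, ν ∈ (0,1), θ ∈ (0,1], s > 0, q ≥ 0, and suppose γ > dh and the viability condition p(γ − dh)(νq + s(θ + ν − θν)) > d(q + s) + dp(1 − ν) holds, so that x̂ = d(q + s)/(p[γ(νq + s(θ + ν − θν)) − d(1 − ν + hνq + hs(θ + ν − θν))]) > 0. Define ES = (q + s + p·x̂·(1 − ν))/(p·x̂·(νq + s(θ + ν − θν))) and EP = (q + s + p·x̂ − θs)/(p·x̂·(νq + s(θ + ν − θν))), and set s* = d/((γ − dh)θ). Then: ES = EP if s = s*; ES > EP if s > s*; and ES < EP if s < s*. -/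
/-! Write `A = νq + s(θ + ν - θν)` and `B = (γ - dh)A - d(1 - ν)`, so that `x̂ = d(q + s)/(pB)`.
The two expected times share the denominator `p x̂ A`, hence `ES - EP = (θs - p x̂ ν)/(p x̂ A)`,
and the relation `p x̂ B = d(q + s)` turns this into `ES - EP = (γ - dh)θ (s - s*) / (d(q + s))`,
whose sign is that of `s - s*`. -/

theorem eq_gt_lt_of_sub_eq_mul_sub {R : Type*} [CommRing R] [LinearOrder R]
    [IsStrictOrderedRing R] {a b s t k : R} (hk : 0 < k) (h : a - b = k * (s - t)) :
    (s = t → a = b) ∧ (s > t → a > b) ∧ (s < t → a < b) := by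
  refine ⟨fun hst => ?_, fun hst => ?_, fun hst => ?_⟩
  · rw [hst, sub_self, mul_zero, sub_eq_zero] at h
    exact h
  · have := mul_pos hk (sub_pos.2 hst)
    rw [← h] at this
    exact sub_pos.1 this
  · have := mul_neg_of_pos_of_neg hk (sub_neg.2 hst)
    rw [← h] at this
    exact sub_neg.1 this

theorem capture_weight_pos {ν θ s q : ℝ} (hν0 : 0 < ν) (hν1 : ν ≤ 1) (hθ : 0 ≤ θ)
    (hs : 0 < s) (hq : 0 ≤ q) : 0 < ν * q + s * (θ + ν - θ * ν) := by
  have : 0 < θ * (1 - ν) + ν := by nlinarith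
  nlinarith

theorem equilibrium_denominator_gt {p d γ h ν θ s q : ℝ}
    (hviab : p * (γ - d * h) * (ν * q + s * (θ + ν - θ * ν)) >
      d * (q + s) + d * p * (1 - ν)) :
    d * (q + s) < p * (γ * (ν * q + s * (θ + ν - θ * ν)) -
      d * (1 - ν + h * ν * q + h * s * (θ + ν - θ * ν))) := by
  linarith

theorem searchTime_sub_standoffTime {p d γ h ν θ s q x : ℝ} (hp : p ≠ 0) (hx0 : x ≠ 0)
    (hA : ν * q + s * (θ + ν - θ * ν) ≠ 0) (hdqs : d * (q + s) ≠ 0) (hc : (γ - d * h) * θ ≠ 0)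
    (hx : x * (p * (γ * (ν * q + s * (θ + ν - θ * ν)) -
      d * (1 - ν + h * ν * q + h * s * (θ + ν - θ * ν)))) = d * (q + s)) :
    (q + s + p * x * (1 - ν)) / (p * x * (ν * q + s * (θ + ν - θ * ν))) -
      (q + s + p * x - θ * s) / (p * x * (ν * q + s * (θ + ν - θ * ν))) =
      (γ - d * h) * θ / (d * (q + s)) * (s - d / ((γ - d * h) * θ)) := by
  rw [div_sub_div_same]
  calc (q + s + p * x * (1 - ν) - (q + s + p * x - θ * s)) / (p * x * (ν * q + s * (θ + ν - θ * ν)))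
      = ((γ - d * h) * θ * s - d) / (d * (q + s)) := by
        rw [div_eq_div_iff (by simp [*]) hdqs]
        linear_combination (-θ * s) * hx
    _ = (γ - d * h) * θ / (d * (q + s)) * (s - d / ((γ - d * h) * θ)) := by
        rw [div_mul_eq_mul_div, mul_sub, mul_div_cancel₀ _ hc]

theorem stmt0_general (p d γ h ν θ s q : ℝ)
    (hp : 0 < p) (hd : 0 < d)
    (hν : ν ∈ Set.Ioo (0 : ℝ) 1) (hθ : θ ∈ Set.Ioc (0 : ℝ) 1)
    (hs : 0 < s) (hq : 0 ≤ q)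
    (hγdh : γ > d * h)
    (hviab : p * (γ - d * h) * (ν * q + s * (θ + ν - θ * ν)) >
      d * (q + s) + d * p * (1 - ν))
    (xhat ES EP sstar : ℝ)
    (hx : xhat = d * (q + s) /
      (p * (γ * (ν * q + s * (θ + ν - θ * ν)) -
        d * (1 - ν + h * ν * q + h * s * (θ + ν - θ * ν)))))
    (hES : ES = (q + s + p * xhat * (1 - ν)) /
      (p * xhat * (ν * q + s * (θ + ν - θ * ν))))
    (hEP : EP = (q + s + p * xhat - θ * s) /
      (p * xhat * (ν * q + s * (θ + ν - θ * ν))))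
    (hst : sstar = d / ((γ - d * h) * θ)) :
    0 < xhat ∧
    (s = sstar → ES = EP) ∧
    (s > sstar → ES > EP) ∧
    (s < sstar → ES < EP) := by
  have hA := capture_weight_pos hν.1 hν.2.le hθ.1.le hs hq
  have hdqs : 0 < d * (q + s) := by positivity
  have hdenom := equilibrium_denominator_gt hviab
  have hxpos : 0 < xhat := hx ▸ div_pos hdqs (hdqs.trans hdenom)
  have hxeq := hx ▸ div_mul_cancel₀ (d * (q + s)) (hdqs.trans hdenom).ne'
  have hc : 0 < (γ - d * h) * θ := mul_pos (sub_pos.2 hγdh) hθ.1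
  refine ⟨hxpos, eq_gt_lt_of_sub_eq_mul_sub (div_pos hc hdqs) ?_⟩
  rw [hES, hEP, hst]
  exact searchTime_sub_standoffTime hp.ne' hxpos.ne' hA.ne' hdqs.ne' hc.ne' hxeq

/-- Proposition 1 of the paper: comparison of the expected time till prey capture
for a predator starting in the searching state (`ES`) versus starting in the
stand-off state (`EP`), at the resident equilibrium prey density `xhat`. -/
theorem stmt0 (p d γ h ν θ s q : ℝ)
    (hp : 0 < p) (hd : 0 < d) (hγ : 0 < γ) (hh : 0 < h)
    (hν : ν ∈ Set.Ioo (0 : ℝ) 1) (hθ : θ ∈ Set.Ioc (0 : ℝ) 1)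
    (hs : 0 < s) (hq : 0 ≤ q)
    (hγdh : γ > d * h)
    (hviab : p * (γ - d * h) * (ν * q + s * (θ + ν - θ * ν)) >
      d * (q + s) + d * p * (1 - ν))
    (xhat ES EP sstar : ℝ)
    (hx : xhat = d * (q + s) /
      (p * (γ * (ν * q + s * (θ + ν - θ * ν)) -
        d * (1 - ν + h * ν * q + h * s * (θ + ν - θ * ν)))))
    (hES : ES = (q + s + p * xhat * (1 - ν)) /
      (p * xhat * (ν * q + s * (θ + ν - θ * ν))))
    (hEP : EP = (q + s + p * xhat - θ * s) /
      (p * xhat * (ν * q + s * (θ + ν - θ * ν))))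
    (hst : sstar = d / ((γ - d * h) * θ)) :
    0 < xhat ∧
    (s = sstar → ES = EP) ∧
    (s > sstar → ES > EP) ∧
    (s < sstar → ES < EP) :=
  stmt0_general p d γ h ν θ s q hp hd hν hθ hs hq hγdh hviab xhat ES EP sstar hx hES hEP hst
end

section
/- Fix p > 0, d > 0, γ > 0, h > 0, ν ∈ (0,1), θ ∈ (0,1] with γ > dh. Set s* = d/((γ − dh)θ). Then for every q ≥ 0 such that γ(νq + s*(θ + ν − θν)) − d(1 − ν + hνq + hs*(θ + ν − θν)) > 0, the equilibrium prey density x̂ = d(q + s*)/(p[γ(νq + s*(θ + ν − θν)) − d(1 − ν + hνq + hs*(θ + ν − θν))]) satisfies pν·x̂ = θ·s*. In particular the predator isocline (the zero set of the predator selection gradient) is the vertical line s = d/((γ − dh)θ), independent of q. -/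
/-- At `s = s* = d/((γ - dh)θ)`, the equilibrium prey density `x̂` satisfies
`pν·x̂ = θ·s*` for every predator giving-up rate `q ≥ 0` (for which the
equilibrium is defined), i.e. the predator isocline is the vertical line
`s = d/((γ - dh)θ)`, independent of `q`. -/
theorem stmt2 (p d γ h ν θ sstar : ℝ)
    (hp : 0 < p) (hd : 0 < d) (hγ : 0 < γ) (hh : 0 < h)
    (hν : ν ∈ Set.Ioo (0 : ℝ) 1) (hθ : θ ∈ Set.Ioc (0 : ℝ) 1)
    (hγdh : γ > d * h)
    (hst : sstar = d / ((γ - d * h) * θ)) :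
    ∀ q : ℝ, 0 ≤ q →
      0 < γ * (ν * q + sstar * (θ + ν - θ * ν)) -
          d * (1 - ν + h * ν * q + h * sstar * (θ + ν - θ * ν)) →
      p * ν * (d * (q + sstar) /
        (p * (γ * (ν * q + sstar * (θ + ν - θ * ν)) -
          d * (1 - ν + h * ν * q + h * sstar * (θ + ν - θ * ν))))) = θ * sstar := by
  intro q hq hpos
  have hθ0 : θ ≠ 0 := ne_of_gt hθ.1
  have hγdh' : γ - d * h ≠ 0 := by linarith
  have hden : p * (γ * (ν * q + sstar * (θ + ν - θ * ν)) -
      d * (1 - ν + h * ν * q + h * sstar * (θ + ν - θ * ν))) ≠ 0 :=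
    ne_of_gt (mul_pos hp hpos)
  rw [mul_comm (p * ν) _, div_mul_eq_mul_div, div_eq_iff hden]
  have key : sstar * ((γ - d * h) * θ) = d := by
    rw [hst]; field_simp
  linear_combination (-(p * ν * q + p * sstar * (θ + ν - θ * ν))) * key
end

section
/- Let p > 0, h > 0, x > 0, ν ∈ [0,1), θ ∈ [0,1], q ≥ 0, s ≥ 0 with q + s > 0 and νq + s(θ + ν − θν) > 0. Write β = p(νq + s(θ + ν − θν))/(q + s) and H = h + (1 − ν)/(νq + s(θ + ν − θν)). Then 1 + hpx + p(ν − 1)[(hq − 1)x/(q + s) + h(1 − θ)sx/(q + s)] = 1 + βHx > 0 and νpx + θs(1 − ν)(p/(q + s))x = βx, so that the functional response f(x) = (νpx + θs(1 − ν)(p/(q+s))x)/(1 + hpx + p(ν − 1)[(hq − 1)x/(q+s) + h(1 − θ)sx/(q+s)]) equals βx/(1 + βHx), a Holling type II functional response. -/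
/-!
Both the numerator and the denominator of the stand-off functional response are linear in `x`
with a common factor `p / (q + s)`. Writing `B = νq + s(θ + ν - θν)`, the numerator's slope is
`p B / (q + s) = β`, while the denominator's slope collapses to `p (h B + 1 - ν) / (q + s)`,
which is `β H`.
-/

section StandOff

variable {K : Type*} [Field K] (p h x ν θ q s : K)

theorem standOff_numerator_eq (hqs : q + s ≠ 0) :
    ν * p * x + θ * s * (1 - ν) * (p / (q + s)) * x
      = p * (ν * q + s * (θ + ν - θ * ν)) / (q + s) * x := by
  field_simp
  ring

theorem standOff_denominator_eq (hqs : q + s ≠ 0) :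
    1 + h * p * x +
        p * (ν - 1) * ((h * q - 1) * x / (q + s) + h * (1 - θ) * s * x / (q + s))
      = 1 + p * (h * (ν * q + s * (θ + ν - θ * ν)) + (1 - ν)) / (q + s) * x := by
  field_simp
  ring

omit x ν θ in
theorem div_mul_add_div_self (B : K) (hB : B ≠ 0) (c : K) :
    p * B / (q + s) * (h + c / B) = p * (h * B + c) / (q + s) := by
  field_simp

end StandOff

theorem stmt13_general (p h x ν θ q s β H : ℝ)
    (hp : 0 < p) (hh : 0 < h) (hx : 0 < x)
    (hν : ν ∈ Set.Ico (0 : ℝ) 1)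
    (hqs : 0 < q + s)
    (hB : 0 < ν * q + s * (θ + ν - θ * ν))
    (hβ : β = p * (ν * q + s * (θ + ν - θ * ν)) / (q + s))
    (hH : H = h + (1 - ν) / (ν * q + s * (θ + ν - θ * ν))) :
    (1 + h * p * x +
        p * (ν - 1) * ((h * q - 1) * x / (q + s) + h * (1 - θ) * s * x / (q + s))
      = 1 + β * H * x) ∧
    (0 < 1 + β * H * x) ∧
    (ν * p * x + θ * s * (1 - ν) * (p / (q + s)) * x = β * x) ∧
    ((ν * p * x + θ * s * (1 - ν) * (p / (q + s)) * x) /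
        (1 + h * p * x +
          p * (ν - 1) * ((h * q - 1) * x / (q + s) + h * (1 - θ) * s * x / (q + s)))
      = β * x / (1 + β * H * x)) := by
  have hden := standOff_denominator_eq p h x ν θ q s hqs.ne'
  rw [← div_mul_add_div_self p h q s _ hB.ne', ← hβ, ← hH] at hden
  have hnum := hβ ▸ standOff_numerator_eq p x ν θ q s hqs.ne'
  have hβ_pos : 0 < β := hβ ▸ by positivity
  have hH_pos : 0 < H := hH ▸ add_pos_of_pos_of_nonneg hh (div_nonneg (sub_nonneg.2 hν.2.le) hB.le)
  exact ⟨hden, by positivity, hnum, by rw [hden, hnum]⟩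

/-- The functional response derived from the fast stand-off dynamics is a
Holling type II functional response: the denominator equals `1 + βHx > 0`
and the numerator equals `βx`, with effective capture rate `β` and effective
handling time `H`. -/
theorem stmt13 (p h x ν θ q s β H : ℝ)
    (hp : 0 < p) (hh : 0 < h) (hx : 0 < x)
    (hν : ν ∈ Set.Ico (0 : ℝ) 1) (hθ : θ ∈ Set.Icc (0 : ℝ) 1)
    (hq : 0 ≤ q) (hs : 0 ≤ s) (hqs : 0 < q + s)
    (hB : 0 < ν * q + s * (θ + ν - θ * ν))
    (hβ : β = p * (ν * q + s * (θ + ν - θ * ν)) / (q + s))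
    (hH : H = h + (1 - ν) / (ν * q + s * (θ + ν - θ * ν))) :
    (1 + h * p * x +
        p * (ν - 1) * ((h * q - 1) * x / (q + s) + h * (1 - θ) * s * x / (q + s))
      = 1 + β * H * x) ∧
    (0 < 1 + β * H * x) ∧
    (ν * p * x + θ * s * (1 - ν) * (p / (q + s)) * x = β * x) ∧
    ((ν * p * x + θ * s * (1 - ν) * (p / (q + s)) * x) /
        (1 + h * p * x +
          p * (ν - 1) * ((h * q - 1) * x / (q + s) + h * (1 - θ) * s * x / (q + s)))
      = β * x / (1 + β * H * x)) :=
  stmt13_general p h x ν θ q s β H hp hh hx hν hqs hB hβ hH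
end

section
/- Let p > 0, d > 0, γ > 0, h > 0, ν ∈ [0,1), θ ∈ (0,1], s ≥ 0, q ≥ 0 with q + s > 0 and νq + s(θ + ν − θν) > 0. Write β = p(νq + s(θ + ν − θν))/(q + s) and H = h + (1 − ν)/(νq + s(θ + ν − θν)), assume γ ≠ dH, and let ŷ = γ(β(γ − dH) − d)/(β²(γ − dH)²). Then ŷ = 0 if and only if p(γ − dh)(νq + s(θ + ν − θν)) = d(q + s) + dp(1 − ν). Hence the zero set of ŷ in the (s,q)-plane (the extinction boundary, where a transcritical bifurcation occurs) is the straight line q·(dhνp + d − γνp) = dp(ν − 1 − hs(θ + ν − θν)) − ds + γps(θ + ν − θν). -/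
/-- The extinction boundary: the predator equilibrium density `ŷ` vanishes
exactly when `p(γ - dh)(νq + s(θ + ν - θν)) = d(q + s) + dp(1 - ν)`, i.e.
exactly on the straight line
`q(dhνp + d - γνp) = dp(ν - 1 - hs(θ + ν - θν)) - ds + γps(θ + ν - θν)`
in the `(s,q)`-plane, where a transcritical bifurcation occurs. -/
theorem stmt15 (p d γ h ν θ s q β H yhat : ℝ)
    (hp : 0 < p) (hd : 0 < d) (hγ : 0 < γ) (hh : 0 < h)
    (hν : ν ∈ Set.Ico (0 : ℝ) 1) (hθ : θ ∈ Set.Ioc (0 : ℝ) 1)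
    (hs : 0 ≤ s) (hq : 0 ≤ q) (hqs : 0 < q + s)
    (hB : 0 < ν * q + s * (θ + ν - θ * ν))
    (hβ : β = p * (ν * q + s * (θ + ν - θ * ν)) / (q + s))
    (hH : H = h + (1 - ν) / (ν * q + s * (θ + ν - θ * ν)))
    (hγH : γ ≠ d * H)
    (hyhat : yhat = γ * (β * (γ - d * H) - d) / (β ^ 2 * (γ - d * H) ^ 2)) :
    (yhat = 0 ↔
      p * (γ - d * h) * (ν * q + s * (θ + ν - θ * ν)) =
        d * (q + s) + d * p * (1 - ν)) ∧
    (yhat = 0 ↔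
      q * (d * h * ν * p + d - γ * ν * p) =
        d * p * (ν - 1 - h * s * (θ + ν - θ * ν)) - d * s +
          γ * p * s * (θ + ν - θ * ν)) := by
  have hBne : ν * q + s * (θ + ν - θ * ν) ≠ 0 := ne_of_gt hB
  have hqsne : q + s ≠ 0 := ne_of_gt hqs
  have hβ0 : β ≠ 0 := by
    rw [hβ]; positivity
  have hne : γ - d * H ≠ 0 := sub_ne_zero.mpr hγH
  have key : yhat = 0 ↔ β * (γ - d * H) = d := by
    rw [hyhat, div_eq_zero_iff]
    constructor
    · rintro (h | h)
      · rcases mul_eq_zero.mp h with h | h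
        · exact absurd h (ne_of_gt hγ)
        · linarith [sub_eq_zero.mp h]
      · exact absurd h (by positivity)
    · intro h
      left
      rw [mul_eq_zero]
      right
      linarith
  have e1 : (β * (γ - d * H) = d) ↔
      p * (γ - d * h) * (ν * q + s * (θ + ν - θ * ν)) =
        d * (q + s) + d * p * (1 - ν) := by
    subst hβ hH
    rw [div_mul_eq_mul_div, div_eq_iff hqsne]
    have hB' : (1 - ν) / (ν * q + s * (θ + ν - θ * ν)) *
        (ν * q + s * (θ + ν - θ * ν)) = 1 - ν := div_mul_cancel₀ _ hBne
    constructor <;> intro h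
    · linear_combination h + p * d * hB'
    · linear_combination h - p * d * hB'
  have e2 : (p * (γ - d * h) * (ν * q + s * (θ + ν - θ * ν)) =
        d * (q + s) + d * p * (1 - ν)) ↔
      (q * (d * h * ν * p + d - γ * ν * p) =
        d * p * (ν - 1 - h * s * (θ + ν - θ * ν)) - d * s +
          γ * p * s * (θ + ν - θ * ν)) := by
    constructor <;> intro h <;> linear_combination -h
  exact ⟨key.trans e1, (key.trans e1).trans e2⟩
end

section
/- Let d > 0, γ > 0, h > 0, ν ∈ (0,1), θ ∈ (0,1] with γ > dh, and set p = d/((γ − dh)ν). Then for all s ≥ 0, q ≥ 0 with q + s > 0, the extinction-boundary equation p(γ − dh)(νq + s(θ + ν − θν)) = d(q + s) + dp(1 − ν) holds if and only if s = d/((γ − dh)θ). In particular, at this value of p the prey isocline coincides with the vertical predator isocline s = d/((γ − dh)θ), independently of q. -/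
/-!
The defect of the extinction-boundary equation splits as
`(p g ν - d)(q + s) + (1 - ν) p (g θ s - d)` with `g = γ - d h`. The special encounter rate
`p = d / (g ν)` kills the first summand, which is the only one involving `q`, and the second
vanishes exactly on the predator isocline `s = d / (g θ)`.
-/

theorem extinctionBoundary_iff_defect_eq_zero {p d g ν θ s q : ℝ} :
    p * g * (ν * q + s * (θ + ν - θ * ν)) = d * (q + s) + d * p * (1 - ν) ↔
      (p * g * ν - d) * (q + s) + (1 - ν) * p * (g * θ * s - d) = 0 := by
  rw [← sub_eq_zero]
  constructor <;> intro h <;> linear_combination h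

theorem extinctionBoundary_iff_of_mul_eq {p d g ν θ s q : ℝ} (hcrit : p * g * ν = d)
    (hp : p ≠ 0) (hν : ν ≠ 1) (hgθ : g * θ ≠ 0) :
    p * g * (ν * q + s * (θ + ν - θ * ν)) = d * (q + s) + d * p * (1 - ν) ↔
      s = d / (g * θ) := by
  rw [extinctionBoundary_iff_defect_eq_zero, hcrit, sub_self, zero_mul, zero_add,
    mul_eq_zero_iff_left (mul_ne_zero (sub_ne_zero.mpr hν.symm) hp), sub_eq_zero,
    eq_div_iff hgθ, mul_comm]

theorem stmt16_general (p d γ h ν θ : ℝ)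
    (hd : 0 < d)
    (hν : ν ∈ Set.Ioo (0 : ℝ) 1) (hθ : θ ∈ Set.Ioc (0 : ℝ) 1)
    (hγdh : γ > d * h)
    (hpdef : p = d / ((γ - d * h) * ν)) :
    ∀ s q : ℝ, 0 ≤ s → 0 ≤ q → 0 < q + s →
      (p * (γ - d * h) * (ν * q + s * (θ + ν - θ * ν)) =
          d * (q + s) + d * p * (1 - ν) ↔
        s = d / ((γ - d * h) * θ)) := by
  intro s q _ _ _
  have hg : γ - d * h ≠ 0 := (sub_pos.mpr hγdh).ne'
  have hν0 : ν ≠ 0 := hν.1.ne'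
  refine extinctionBoundary_iff_of_mul_eq ?_ ?_ hν.2.ne (mul_ne_zero hg hθ.1.ne')
  · rw [hpdef]
    field_simp
  · rw [hpdef]
    exact div_ne_zero hd.ne' (mul_ne_zero hg hν0)

/-- At the special encounter rate `p = d/((γ - dh)ν)`, the extinction
boundary (prey isocline) coincides with the vertical predator isocline
`s = d/((γ - dh)θ)`, independently of `q`. -/
theorem stmt16 (p d γ h ν θ : ℝ)
    (hd : 0 < d) (hγ : 0 < γ) (hh : 0 < h)
    (hν : ν ∈ Set.Ioo (0 : ℝ) 1) (hθ : θ ∈ Set.Ioc (0 : ℝ) 1)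
    (hγdh : γ > d * h)
    (hpdef : p = d / ((γ - d * h) * ν)) :
    ∀ s q : ℝ, 0 ≤ s → 0 ≤ q → 0 < q + s →
      (p * (γ - d * h) * (ν * q + s * (θ + ν - θ * ν)) =
          d * (q + s) + d * p * (1 - ν) ↔
        s = d / ((γ - d * h) * θ)) :=
  stmt16_general p d γ h ν θ hd hν hθ hγdh hpdef
end

section
/- Let p > 0, d > 0, γ > 0, h > 0, ν ∈ (0,1), θ ∈ (0,1] with γ > dh, and set s* = d/((γ − dh)θ) and q* = 0. Then x̂ = d·s*/(p[γ·s*(θ + ν − θν) − d(1 − ν + hs*(θ + ν − θν))]) is positive and equals s*θ/(pν), and at (s, q) = (s*, q*): (i) the prey selection gradient −(pqθ(1 − ν)/(q + s)²)·C vanishes (for any C), and (ii) the predator selection gradient pγ(1 − ν)(pν·x̂ − sθ)/[q + s + p·x̂·(1 − ν + hqν + hs(θ + ν − θν))]² vanishes. Hence (s*, 0) is the unique singular strategy of the coevolutionary dynamics. -/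
/-!
For `q > 0` the prey gradient is strictly negative, so every singular strategy has `q = 0`.
Write `A = θ + ν - θν` and `M(s) = γ s A - d (1 - ν + h s A)`, so that the resident prey density
at `q = 0` is `x̂(s) = d s / (p M(s))`. The predator gradient vanishes exactly when
`p ν x̂(s) = s θ`, i.e. when `ν d = θ M(s)`, and the identity
`ν d - θ M(s) = A (d - s (γ - d h) θ)` turns this into `s = s*`.
-/

noncomputable section

namespace StandOff

variable {p d γ h ν θ s q C x : ℝ}

def equilibriumDenom (d γ h ν θ s q : ℝ) : ℝ :=
  γ * (ν * q + s * (θ + ν - θ * ν)) - d * (1 - ν + h * ν * q + h * s * (θ + ν - θ * ν))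

def preyDensity (p d γ h ν θ s q : ℝ) : ℝ :=
  d * (q + s) / (p * equilibriumDenom d γ h ν θ s q)

def preyGradient (p ν θ s q C : ℝ) : ℝ :=
  -(p * q * θ * (1 - ν) / (q + s) ^ 2) * C

/-- `x` stands for the resident prey density `x̂`. -/
def predatorGradient (p γ h ν θ s q x : ℝ) : ℝ :=
  p * γ * (1 - ν) * (p * ν * x - s * θ) /
    (q + s + p * x * (1 - ν + h * q * ν + h * s * (θ + ν - θ * ν))) ^ 2

lemma add_sub_mul_pos (hν : ν ∈ Set.Ioo (0 : ℝ) 1) (hθ : 0 < θ) : 0 < θ + ν - θ * ν := by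
  nlinarith [hν.1, hν.2]

lemma eq_zero_of_preyGradient_eq_zero (hp : p ≠ 0) (hθ : θ ≠ 0) (hν : ν ≠ 1) (hC : C ≠ 0)
    (hqs : q + s ≠ 0) (hgrad : preyGradient p ν θ s q C = 0) : q = 0 := by
  simpa [preyGradient, hp, hθ, hC, hqs, sub_eq_zero, Ne.symm hν] using hgrad

lemma mul_eq_of_predatorGradient_eq_zero (hp : p ≠ 0) (hγ : γ ≠ 0) (hν : ν ≠ 1)
    (hden : q + s + p * x * (1 - ν + h * q * ν + h * s * (θ + ν - θ * ν)) ≠ 0)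
    (hgrad : predatorGradient p γ h ν θ s q x = 0) : p * ν * x = s * θ := by
  simpa [predatorGradient, hp, hγ, hden, sub_eq_zero, Ne.symm hν] using hgrad

lemma add_mul_preyDensity (hp : p ≠ 0) (hM : equilibriumDenom d γ h ν θ s q ≠ 0) :
    q + s + p * preyDensity p d γ h ν θ s q * (1 - ν + h * q * ν + h * s * (θ + ν - θ * ν)) =
      γ * (q + s) * (ν * q + s * (θ + ν - θ * ν)) / equilibriumDenom d γ h ν θ s q := by
  rw [preyDensity, eq_div_iff hM]
  field_simp
  rw [equilibriumDenom]
  ring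

lemma nu_mul_sub_theta_mul_equilibriumDenom :
    ν * d - θ * equilibriumDenom d γ h ν θ s 0 =
      (θ + ν - θ * ν) * (d - s * ((γ - d * h) * θ)) := by
  rw [equilibriumDenom]
  ring

lemma mul_preyDensity_eq_iff (hp : p ≠ 0) (hs : s ≠ 0) (hA : θ + ν - θ * ν ≠ 0)
    (hM : equilibriumDenom d γ h ν θ s 0 ≠ 0) :
    p * ν * preyDensity p d γ h ν θ s 0 = s * θ ↔ s * ((γ - d * h) * θ) = d := by
  have hsub : p * ν * preyDensity p d γ h ν θ s 0 - s * θ =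
      s * (ν * d - θ * equilibriumDenom d γ h ν θ s 0) / equilibriumDenom d γ h ν θ s 0 := by
    rw [preyDensity]
    field_simp
    ring
  rw [← sub_eq_zero, hsub, div_eq_zero_iff, or_iff_left hM, mul_eq_zero, or_iff_right hs,
    nu_mul_sub_theta_mul_equilibriumDenom, mul_eq_zero, or_iff_right hA, sub_eq_zero, eq_comm]

lemma equilibriumDenom_of_singular (hθ : θ ≠ 0) (hs : s * ((γ - d * h) * θ) = d) :
    equilibriumDenom d γ h ν θ s 0 = ν * d / θ := by
  have hid := nu_mul_sub_theta_mul_equilibriumDenom (d := d) (γ := γ) (h := h) (ν := ν)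
    (θ := θ) (s := s)
  rw [hs, sub_self, mul_zero, sub_eq_zero] at hid
  rw [hid]
  field_simp

lemma preyDensity_of_singular (hd : d ≠ 0) (hν : ν ≠ 0) (hθ : θ ≠ 0)
    (hs : s * ((γ - d * h) * θ) = d) :
    preyDensity p d γ h ν θ s 0 = s * θ / (p * ν) := by
  rw [preyDensity, equilibriumDenom_of_singular hθ hs]
  field_simp
  ring

end StandOff

end

open StandOff

theorem stmt17_general (p d γ h ν θ sstar xhat : ℝ)
    (hp : 0 < p) (hd : 0 < d) (hγ : 0 < γ)
    (hν : ν ∈ Set.Ioo (0 : ℝ) 1) (hθ : θ ∈ Set.Ioc (0 : ℝ) 1)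
    (hγdh : γ > d * h)
    (hst : sstar = d / ((γ - d * h) * θ))
    (hx : xhat = d * sstar /
      (p * (γ * sstar * (θ + ν - θ * ν) -
        d * (1 - ν + h * sstar * (θ + ν - θ * ν))))) :
    0 < xhat ∧
    xhat = sstar * θ / (p * ν) ∧
    (∀ C : ℝ, -(p * 0 * θ * (1 - ν) / ((0 : ℝ) + sstar) ^ 2) * C = 0) ∧
    p * γ * (1 - ν) * (p * ν * xhat - sstar * θ) /
      (0 + sstar + p * xhat *
        (1 - ν + h * 0 * ν + h * sstar * (θ + ν - θ * ν))) ^ 2 = 0 ∧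
    (∀ s q C : ℝ, 0 < s → 0 ≤ q → 0 < C →
      0 < γ * (ν * q + s * (θ + ν - θ * ν)) -
          d * (1 - ν + h * ν * q + h * s * (θ + ν - θ * ν)) →
      -(p * q * θ * (1 - ν) / (q + s) ^ 2) * C = 0 →
      p * γ * (1 - ν) *
          (p * ν * (d * (q + s) /
            (p * (γ * (ν * q + s * (θ + ν - θ * ν)) -
              d * (1 - ν + h * ν * q + h * s * (θ + ν - θ * ν))))) - s * θ) /
        (q + s + p * (d * (q + s) /
            (p * (γ * (ν * q + s * (θ + ν - θ * ν)) -
              d * (1 - ν + h * ν * q + h * s * (θ + ν - θ * ν))))) *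
          (1 - ν + h * q * ν + h * s * (θ + ν - θ * ν))) ^ 2 = 0 →
      s = sstar ∧ q = 0) := by
  have hA := add_sub_mul_pos hν hθ.1
  have hsing : sstar * ((γ - d * h) * θ) = d := by
    rw [hst, div_mul_cancel₀ _ (mul_pos (sub_pos.2 hγdh) hθ.1).ne']
  have hx' : xhat = sstar * θ / (p * ν) := by
    rw [← preyDensity_of_singular hd.ne' hν.1.ne' hθ.1.ne' hsing, hx, preyDensity,
      equilibriumDenom]
    ring
  have hsstar : 0 < sstar := by
    rw [hst]
    exact div_pos hd (mul_pos (sub_pos.2 hγdh) hθ.1)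
  refine ⟨by rw [hx']; exact div_pos (mul_pos hsstar hθ.1) (mul_pos hp hν.1), hx',
    fun C => by simp, ?_, ?_⟩
  · rw [hx', mul_div_cancel₀ _ (mul_pos hp hν.1).ne', sub_self, mul_zero, zero_div]
  · intro s q C hs hq hC hM hprey hpred
    obtain rfl : q = 0 := eq_zero_of_preyGradient_eq_zero hp.ne' hθ.1.ne' hν.2.ne hC.ne'
      (by positivity) hprey
    have hden : 0 < 0 + s + p * preyDensity p d γ h ν θ s 0 *
        (1 - ν + h * 0 * ν + h * s * (θ + ν - θ * ν)) := by
      rw [add_mul_preyDensity hp.ne' hM.ne', mul_zero, zero_add]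
      have := mul_pos hs hA
      positivity
    have hsing' := (mul_preyDensity_eq_iff hp.ne' hs.ne' hA.ne' hM.ne').1
      (mul_eq_of_predatorGradient_eq_zero hp.ne' hγ.ne' hν.2.ne hden.ne' hpred)
    rw [hst, eq_div_iff (mul_pos (sub_pos.2 hγdh) hθ.1).ne']
    exact ⟨hsing', rfl⟩

/-- The pair `(s*, q*) = (d/((γ - dh)θ), 0)` is the unique singular strategy
of the coevolutionary dynamics: the equilibrium prey density there is positive
and equals `s*θ/(pν)`, both selection gradients vanish at `(s*, 0)`, and any
other strategy pair at which both gradients vanish equals `(s*, 0)`. -/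
theorem stmt17 (p d γ h ν θ sstar xhat : ℝ)
    (hp : 0 < p) (hd : 0 < d) (hγ : 0 < γ) (hh : 0 < h)
    (hν : ν ∈ Set.Ioo (0 : ℝ) 1) (hθ : θ ∈ Set.Ioc (0 : ℝ) 1)
    (hγdh : γ > d * h)
    (hst : sstar = d / ((γ - d * h) * θ))
    (hx : xhat = d * sstar /
      (p * (γ * sstar * (θ + ν - θ * ν) -
        d * (1 - ν + h * sstar * (θ + ν - θ * ν))))) :
    0 < xhat ∧
    xhat = sstar * θ / (p * ν) ∧
    (∀ C : ℝ, -(p * 0 * θ * (1 - ν) / ((0 : ℝ) + sstar) ^ 2) * C = 0) ∧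
    p * γ * (1 - ν) * (p * ν * xhat - sstar * θ) /
      (0 + sstar + p * xhat *
        (1 - ν + h * 0 * ν + h * sstar * (θ + ν - θ * ν))) ^ 2 = 0 ∧
    (∀ s q C : ℝ, 0 < s → 0 ≤ q → 0 < C →
      0 < γ * (ν * q + s * (θ + ν - θ * ν)) -
          d * (1 - ν + h * ν * q + h * s * (θ + ν - θ * ν)) →
      -(p * q * θ * (1 - ν) / (q + s) ^ 2) * C = 0 →
      p * γ * (1 - ν) *
          (p * ν * (d * (q + s) /
            (p * (γ * (ν * q + s * (θ + ν - θ * ν)) -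
              d * (1 - ν + h * ν * q + h * s * (θ + ν - θ * ν))))) - s * θ) /
        (q + s + p * (d * (q + s) /
            (p * (γ * (ν * q + s * (θ + ν - θ * ν)) -
              d * (1 - ν + h * ν * q + h * s * (θ + ν - θ * ν))))) *
          (1 - ν + h * q * ν + h * s * (θ + ν - θ * ν))) ^ 2 = 0 →
      s = sstar ∧ q = 0) :=
  stmt17_general p d γ h ν θ sstar xhat hp hd hγ hν hθ hγdh hst hx
end
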